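/- Let R be a Noetherian local ring, I an ideal, G = gr_I(R), and J = (a) a reduction of I with I^{r+1} = a I^r and a regular on R. Let x ∈ R be regular on R and on R/I^j for all 1 ≤ j ≤ r-1. Suppose also (0 : a) ∩ I^n = 0 for n ≥ r (automatic since a is regular). Then x* + a* is a nonzerodivisor on G, where x* is the degree-0 initial form of x and a* ∈ [G]_1 is the initial form of a. -/

import Mathlib

/-!
Lift an element of `gr_I(R)` to `f = ∑ cₙ tⁿ` in the Rees algebra, `cₙ ∈ Iⁿ`; it vanishes in `G`
iff `cₙ ∈ Iⁿ⁺¹` for all `n`. If `(x* + a*) f` vanishes in `G`, then `x c₀ ∈ I` and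
`x cₙ₊₁ + a cₙ ∈ Iⁿ⁺²`. For `n + 1 < r` induct upwards: `a cₙ₋₁ ∈ Iⁿ⁺¹`, so `x cₙ ∈ Iⁿ⁺¹`, and `x`
is regular on `R/Iⁿ⁺¹`. For `n + 1 ≥ r` induct downwards from the degree of `f`:
`a cₙ ∈ Iⁿ⁺² = a Iⁿ⁺¹`, and `a` is regular on `R`.
-/

noncomputable section

open Polynomial IsLocalRing
open scoped Classical

set_option maxHeartbeats 1000000
set_option synthInstance.maxHeartbeats 400000

variable {R : Type*} [CommRing R]

/-- The depth (grade) of the `R`-module `M` with respect to the ideal `J`: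
the supremum of lengths of `M`-regular sequences contained in `J`. -/
def depthIn (J : Ideal R) (M : Type*) [AddCommGroup M] [Module R M] : ℕ∞ :=
  sSup {n : ℕ∞ | ∃ rs : List R, (rs.length : ℕ∞) = n ∧ (∀ r ∈ rs, r ∈ J) ∧
    RingTheory.Sequence.IsRegular M rs}

/-- A Noetherian local ring is Cohen–Macaulay if its depth equals its Krull dimension. -/
def IsCMLocalRing (R : Type*) [CommRing R] [IsLocalRing R] : Prop :=
  IsNoetherianRing R ∧
    ((depthIn (maximalIdeal R) R : ℕ∞) : WithBot ℕ∞) = ringKrullDim R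

/-- The ideal `I·R[It]` of the Rees algebra, whose quotient is the associated graded ring. -/
def constIdeal (I : Ideal R) : Ideal (reesAlgebra I) :=
  Ideal.span ((algebraMap R (reesAlgebra I)) '' I)

/-- The associated graded ring `gr_I(R) = R[It]/I·R[It] ≅ ⊕ Iⁿ/Iⁿ⁺¹`. -/
abbrev assocGraded (I : Ideal R) := reesAlgebra I ⧸ constIdeal I

/-- The degree-`n` graded component of the Rees algebra. -/
def reesPiece (I : Ideal R) (n : ℕ) : Submodule R (reesAlgebra I) where
  carrier := {x | ∀ k, k ≠ n → (x : R[X]).coeff k = 0}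
  add_mem' := by
    intro a b ha hb k hk
    simp [ha k hk, hb k hk]
  zero_mem' := by intro k hk; simp
  smul_mem' := by
    intro c x hx k hk
    simp [hx k hk]

/-- The degree-`n` graded component `[gr_I(R)]ₙ ≅ Iⁿ/Iⁿ⁺¹` of the associated graded ring,
as an `R`-submodule. -/
def gradedPiece (I : Ideal R) (n : ℕ) : Submodule R (assocGraded I) :=
  (reesPiece I n).map (Ideal.Quotient.mkₐ R (constIdeal I)).toLinearMap

/-- The irrelevant ideal `G₊` of the associated graded ring, generated by all homogeneous
elements of positive degree. -/
def irrelevantIdeal (I : Ideal R) : Ideal (assocGraded I) :=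
  Ideal.span {x | ∃ n, 0 < n ∧ x ∈ gradedPiece I n}

/-- The maximal homogeneous ideal `𝔪G + G₊` of the associated graded ring of an ideal in a
local ring; depth of graded modules is taken with respect to this ideal. -/
def maxHomIdeal (I : Ideal R) [IsLocalRing R] : Ideal (assocGraded I) :=
  irrelevantIdeal I ⊔ Ideal.span ((algebraMap R (assocGraded I)) '' (maximalIdeal R))

/-- The fiber cone (special fiber ring) `G ⊗ R/𝔪 = gr_I(R)/𝔪·gr_I(R)`. -/
abbrev fiberCone (I : Ideal R) [IsLocalRing R] :=
  assocGraded I ⧸ Ideal.span ((algebraMap R (assocGraded I)) '' (maximalIdeal R))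

/-- The analytic spread `ℓ(I) = dim gr_I(R) ⊗ R/𝔪`. -/
def analyticSpread (I : Ideal R) [IsLocalRing R] : WithBot ℕ∞ :=
  @ringKrullDim (fiberCone I) (@CommRing.toCommSemiring _ (Ideal.Quotient.commRing
    (R := assocGraded I) (Ideal.span ((algebraMap R (assocGraded I)) '' (maximalIdeal R)))))

/-- The height of an ideal: the infimum of the heights (dimensions of localizations) of the
primes containing it. -/
def idealHeight (I : Ideal R) : WithBot ℕ∞ :=
  sInf {d | ∃ (P : Ideal R) (h : P.IsPrime), I ≤ P ∧
    d = ringKrullDim (Localization (@Ideal.primeCompl R _ P h))}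

/-- `J` is a reduction of `I`: `J ⊆ I` and `I^{n+1} = J·Iⁿ` for some `n`. -/
def IsReduction (J I : Ideal R) : Prop := J ≤ I ∧ ∃ n : ℕ, I ^ (n + 1) = J * I ^ n

/-- `J` is a minimal reduction of `I`: a reduction minimal with respect to inclusion. -/
def IsMinimalReduction (J I : Ideal R) : Prop :=
  IsReduction J I ∧ ∀ J' : Ideal R, IsReduction J' I → J' ≤ J → J' = J

/-- The reduction number `r_J(I)`: the least `n` with `I^{n+1} = J·Iⁿ`. -/
def redNumWrt (J I : Ideal R) : ℕ := sInf {n : ℕ | I ^ (n + 1) = J * I ^ n}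

/-- The reduction number `r(I)`: the minimum of `r_J(I)` over minimal reductions `J`. -/
def reductionNumber (I : Ideal R) : ℕ :=
  sInf {n : ℕ | ∃ J : Ideal R, IsMinimalReduction J I ∧ redNumWrt J I = n}

/-- The saturation `K : G₊^∞`, i.e. elements killed into `K` by a power of the irrelevant
ideal. -/
def satIrrelevant (I : Ideal R) (K : Ideal (assocGraded I)) : Set (assocGraded I) :=
  {x | ∃ k : ℕ, ∀ y ∈ (irrelevantIdeal I) ^ k, y * x ∈ K}

/-- A filter-regular sequence of linear forms in the associated graded ring:
each `zᵢ` is a degree-one element, and the colon ideal `((z₁,…,zᵢ₋₁) : zᵢ)` is contained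
in the `G₊`-saturation of `(z₁,…,zᵢ₋₁)`. -/
def IsFilterRegular (I : Ideal R) (zs : List (assocGraded I)) : Prop :=
  (∀ z ∈ zs, z ∈ gradedPiece I 1) ∧
  ∀ i (h : i < zs.length), ∀ x : assocGraded I,
    x * zs[i] ∈ Ideal.span {w | w ∈ zs.take i} →
    x ∈ satIrrelevant I (Ideal.span {w | w ∈ zs.take i})

/-- The top degree `a(H⁰_{G₊}(G/K))`: the supremum of the degrees of homogeneous elements
of the saturation of `K` that do not lie in `K`. -/
def a0 (I : Ideal R) (K : Ideal (assocGraded I)) : ℕ∞ :=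
  sSup {n : ℕ∞ | ∃ m : ℕ, (m : ℕ∞) = n ∧ ∃ x ∈ gradedPiece I m,
    x ∈ satIrrelevant I K ∧ x ∉ K}

/-- The Castelnuovo–Mumford regularity of the associated graded ring `G = gr_I(R)`,
via Trung's characterization: for a filter-regular sequence `z₁,…,z_s` of linear forms
generating a reduction of `G₊`, `reg G = max_{0 ≤ i ≤ s} a(H⁰_{G₊}(G/(z₁,…,zᵢ)))`. -/
def assocGradedReg (I : Ideal R) : ℕ∞ :=
  sInf {m : ℕ∞ | ∃ zs : List (assocGraded I), IsFilterRegular I zs ∧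
    (∃ n : ℕ, (irrelevantIdeal I) ^ (n + 1) =
      Ideal.span {w | w ∈ zs} * (irrelevantIdeal I) ^ n) ∧
    ∀ i ≤ zs.length, a0 I (Ideal.span {w | w ∈ zs.take i}) ≤ m}

/-- The initial form `a* ∈ [G]₁ = I/I²` of an element `a ∈ I` (junk value `0` if `a ∉ I`). -/
def initialForm (I : Ideal R) (a : R) : assocGraded I :=
  if h : a ∈ I then
    Ideal.Quotient.mk (constIdeal I)
      ⟨Polynomial.monomial 1 a, reesAlgebra.monomial_mem.mpr (by rwa [pow_one])⟩
  else 0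

/-- The degree-zero initial form `x* ∈ [G]₀ = R/I` of `x ∈ R`. -/
def initialForm0 (I : Ideal R) (x : R) : assocGraded I :=
  algebraMap R (assocGraded I) x

section ReesAlgebra

variable {I : Ideal R}

theorem reesAlgebra.coeff_mem_pow (f : reesAlgebra I) (n : ℕ) : (f : R[X]).coeff n ∈ I ^ n :=
  (mem_reesAlgebra_iff I (f : R[X])).mp f.2 n

theorem mem_constIdeal_of_eq_monomial {g : reesAlgebra I} {n : ℕ} {c : R}
    (hg : (g : R[X]) = monomial n c) (hc : c ∈ I ^ (n + 1)) : g ∈ constIdeal I := by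
  rw [pow_succ'] at hc
  induction hc using Submodule.mul_induction_on' generalizing g with
  | mem_mul_mem i hi m hm =>
    have h : algebraMap R (reesAlgebra I) i * ⟨monomial n m, reesAlgebra.monomial_mem.mpr hm⟩ ∈
        constIdeal I :=
      Ideal.mul_mem_right _ _ (Ideal.subset_span ⟨i, hi, rfl⟩)
    convert h using 1
    apply Subtype.ext
    rw [hg, Subalgebra.coe_mul, Subalgebra.coe_algebraMap, Polynomial.algebraMap_eq,
      C_mul_monomial]
  | add y hy z hz ihy ihz =>
    obtain ⟨g₁, hg₁⟩ : ∃ g₁ : reesAlgebra I, (g₁ : R[X]) = monomial n y :=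
      ⟨⟨monomial n y, reesAlgebra.monomial_mem.mpr (Ideal.mul_le_right hy)⟩, rfl⟩
    obtain ⟨g₂, hg₂⟩ : ∃ g₂ : reesAlgebra I, (g₂ : R[X]) = monomial n z :=
      ⟨⟨monomial n z, reesAlgebra.monomial_mem.mpr (Ideal.mul_le_right hz)⟩, rfl⟩
    convert Ideal.add_mem _ (ihy hg₁) (ihz hg₂) using 1
    apply Subtype.ext
    rw [hg, Subalgebra.coe_add, hg₁, hg₂, map_add]

theorem mem_constIdeal_iff (f : reesAlgebra I) :
    f ∈ constIdeal I ↔ ∀ n, (f : R[X]).coeff n ∈ I ^ (n + 1) := by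
  refine ⟨fun hf => ?_, fun hf => ?_⟩
  · induction hf using Submodule.span_induction with
    | mem g hg =>
      obtain ⟨i, hi, rfl⟩ := hg
      intro n
      rw [Subalgebra.coe_algebraMap, Polynomial.algebraMap_eq, coeff_C]
      split_ifs with hn
      · rwa [hn, pow_one]
      · exact zero_mem _
    | zero => simp
    | add g₁ g₂ _ _ ih₁ ih₂ => simpa using fun n => add_mem (ih₁ n) (ih₂ n)
    | smul g₁ g₂ _ ih =>
      intro n
      rw [smul_eq_mul, Subalgebra.coe_mul, coeff_mul]
      refine sum_mem fun ij hij => ?_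
      rw [← Finset.HasAntidiagonal.mem_antidiagonal.mp hij, add_assoc, pow_add]
      exact Ideal.mul_mem_mul (reesAlgebra.coeff_mem_pow g₁ ij.1) (ih ij.2)
  · have hsum : f = ∑ n ∈ (f : R[X]).support,
        (⟨monomial n ((f : R[X]).coeff n), reesAlgebra.monomial_mem.mpr
          (reesAlgebra.coeff_mem_pow f n)⟩ : reesAlgebra I) :=
      Subtype.ext (by simpa using (f : R[X]).as_sum_support)
    rw [hsum]
    exact sum_mem fun n _ => mem_constIdeal_of_eq_monomial rfl (hf n)

end ReesAlgebra

theorem Ideal.pow_succ_eq_span_singleton_mul_of_le {I : Ideal R} {a : R} {r m : ℕ}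
    (hred : I ^ (r + 1) = Ideal.span {a} * I ^ r) (hm : r ≤ m) :
    I ^ (m + 1) = Ideal.span {a} * I ^ m := by
  obtain ⟨k, rfl⟩ := Nat.exists_eq_add_of_le hm
  rw [add_right_comm, pow_add, hred, mul_assoc, ← pow_add]

theorem Ideal.mem_of_mul_mem_span_singleton_mul {J : Ideal R} {a y : R} (ha : IsLeftRegular a)
    (h : a * y ∈ Ideal.span {a} * J) : y ∈ J := by
  obtain ⟨z, hz, hzy⟩ := Ideal.mem_span_singleton_mul.mp h
  exact ha hzy ▸ hz

section LinearFormMul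

variable {I : Ideal R} {a x : R} {p : R[X]}

theorem coeff_C_add_monomial_one_mul_zero :
    ((C x + monomial 1 a) * p).coeff 0 = x * p.coeff 0 := by
  simp [add_mul, mul_coeff_zero]

theorem coeff_C_add_monomial_one_mul_succ (n : ℕ) :
    ((C x + monomial 1 a) * p).coeff (n + 1) = x * p.coeff (n + 1) + a * p.coeff n := by
  rw [add_mul, coeff_add, coeff_C_mul, coeff_monomial_mul]

theorem coeff_mem_pow_succ_of_lt (ha : a ∈ I) {s : ℕ}
    (hx : ∀ n < s, IsSMulRegular (R ⧸ I ^ (n + 1)) x)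
    (hp : ∀ n, ((C x + monomial 1 a) * p).coeff n ∈ I ^ (n + 1)) :
    ∀ n < s, p.coeff n ∈ I ^ (n + 1) := by
  intro n hn
  induction n with
  | zero =>
    refine mem_of_isSMulRegular_quotient_of_smul_mem (hx 0 hn) ?_
    simpa [coeff_C_add_monomial_one_mul_zero] using hp 0
  | succ n ih =>
    refine mem_of_isSMulRegular_quotient_of_smul_mem (hx _ hn) ?_
    have ha' : a * p.coeff n ∈ I ^ (n + 1 + 1) :=
      pow_succ' I (n + 1) ▸ Ideal.mul_mem_mul ha (ih (by omega))
    have hsucc := hp (n + 1)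
    rw [coeff_C_add_monomial_one_mul_succ] at hsucc
    simpa using sub_mem hsucc ha'

theorem coeff_mem_pow_succ_of_le {r : ℕ} (hred : I ^ (r + 1) = Ideal.span {a} * I ^ r)
    (haR : IsLeftRegular a) (hp : ∀ n, ((C x + monomial 1 a) * p).coeff n ∈ I ^ (n + 1))
    {n : ℕ} (hn : r ≤ n + 1) : p.coeff n ∈ I ^ (n + 1) := by
  -- descend from `max n (natDegree p + 1)`, where the coefficient vanishes
  refine Nat.decreasingInduction (motive := fun k _ => r ≤ k + 1 → p.coeff k ∈ I ^ (k + 1))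
    (fun k _ ih hk => ?_) (fun _ => ?_) (le_max_left n (p.natDegree + 1)) hn
  · have hsucc := hp (k + 1)
    rw [coeff_C_add_monomial_one_mul_succ] at hsucc
    have hx' : x * p.coeff (k + 1) ∈ I ^ (k + 1 + 1) := Ideal.mul_mem_left _ _ (ih (by omega))
    have ha' : a * p.coeff k ∈ Ideal.span {a} * I ^ (k + 1) := by
      rw [← Ideal.pow_succ_eq_span_singleton_mul_of_le hred hk]
      simpa using sub_mem hsucc hx'
    exact Ideal.mem_of_mul_mem_span_singleton_mul haR ha'
  · rw [coeff_eq_zero_of_natDegree_lt (by omega)]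
    exact zero_mem _

theorem coeff_mem_pow_succ_of_C_add_monomial_mul {r : ℕ} (ha : a ∈ I)
    (hred : I ^ (r + 1) = Ideal.span {a} * I ^ r) (haR : IsLeftRegular a)
    (hx : ∀ n < r - 1, IsSMulRegular (R ⧸ I ^ (n + 1)) x)
    (hp : ∀ n, ((C x + monomial 1 a) * p).coeff n ∈ I ^ (n + 1)) (n : ℕ) :
    p.coeff n ∈ I ^ (n + 1) := by
  rcases le_or_gt r (n + 1) with hn | hn
  · exact coeff_mem_pow_succ_of_le hred haR hp hn
  · exact coeff_mem_pow_succ_of_lt ha hx hp n (by omega)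

end LinearFormMul

theorem initialForm0_add_initialForm {I : Ideal R} {a : R} (x : R) (ha : a ∈ I) :
    initialForm0 I x + initialForm I a = Ideal.Quotient.mk (constIdeal I)
      ⟨C x + monomial 1 a, add_mem ((reesAlgebra I).algebraMap_mem x)
        (reesAlgebra.monomial_mem.mpr (by rwa [pow_one]))⟩ := by
  rw [initialForm, dif_pos ha, initialForm0]
  exact (map_add (Ideal.Quotient.mk _) (algebraMap R (reesAlgebra I) x) _).symm

theorem initialForm_add_isRegular_general
    {R : Type*} [CommRing R]
    (I : Ideal R) (a x : R) (r : ℕ) (ha : a ∈ I)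
    (hred : I ^ (r + 1) = Ideal.span {a} * I ^ r)
    (haR : ∀ y : R, a * y = 0 → y = 0)
    (hxQ : ∀ j, 1 ≤ j → j ≤ r - 1 → ∀ y : R ⧸ I ^ j, x • y = 0 → y = 0) :
    ∀ gg : assocGraded I, (initialForm0 I x + initialForm I a) * gg = 0 → gg = 0 := by
  intro gg hgg
  obtain ⟨f, rfl⟩ := Ideal.Quotient.mk_surjective gg
  rw [initialForm0_add_initialForm x ha, ← map_mul, Ideal.Quotient.eq_zero_iff_mem,
    mem_constIdeal_iff] at hgg
  rw [Ideal.Quotient.eq_zero_iff_mem, mem_constIdeal_iff]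
  exact coeff_mem_pow_succ_of_C_add_monomial_mul ha hred
    (isLeftRegular_iff_right_eq_zero_of_mul.mpr haR)
    (fun n hn => isSMulRegular_iff_right_eq_zero_of_smul.mpr (hxQ (n + 1) (by omega) (by omega)))
    hgg

/-- The key claim in the proof of Theorem 1.1(2): if `(a)` is a principal reduction of `I`
with `Iʳ⁺¹ = aIʳ` and `a` regular on `R`, and `x` is regular on `R` and on `R/Iʲ` for
`1 ≤ j ≤ r - 1`, with `(0 : a) ∩ Iⁿ = 0` for `n ≥ r`, then `x* + a*` is a nonzerodivisor
on `G = gr_I(R)`, where `x*` is the degree-`0` and `a*` the degree-`1` initial form. -/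
theorem initialForm_add_isRegular
    {R : Type*} [CommRing R] [IsLocalRing R]
    (hNoeth : IsNoetherianRing R)
    (I : Ideal R) (a x : R) (r : ℕ) (ha : a ∈ I)
    (hred : I ^ (r + 1) = Ideal.span {a} * I ^ r)
    (hrmin : ∀ n, I ^ (n + 1) = Ideal.span {a} * I ^ n → r ≤ n)
    (haR : ∀ y : R, a * y = 0 → y = 0)
    (hxR : ∀ y : R, x * y = 0 → y = 0)
    (hxQ : ∀ j, 1 ≤ j → j ≤ r - 1 → ∀ y : R ⧸ I ^ j, x • y = 0 → y = 0)
    (h0a : ∀ n, r ≤ n → ∀ y ∈ Submodule.colon (⊥ : Ideal R) (Ideal.span {a}) ⊓ I ^ n,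
      y = 0) :
    ∀ gg : assocGraded I, (initialForm0 I x + initialForm I a) * gg = 0 → gg = 0 :=
  initialForm_add_isRegular_general I a x r ha hred haR hxQ
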